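/- With T_N(A) = (1/N) ∑_{k=0}^{N-1} I^{⊗(N-1-k)} ⊗ A ⊗ I^{⊗k}, for every A ∈ Mₙ(ℂ) one has (1/2)‖A‖ ≤ ‖T_N(A)‖ ≤ ‖A‖; moreover if A is normal then ‖T_N(A)‖ = ‖A‖. In particular T_N is injective. -/

import Mathlib

/-!
`A ↦ I ⊗ A ⊗ I` is a unital *-homomorphism between C⋆-algebras, hence contractive, and averaging
gives `‖T_N(A)‖ ≤ ‖A‖`. Conversely, for a unit vector `u` the product vector `u^{⊗N}` satisfies
`⟨u^{⊗N}, T_N(A) u^{⊗N}⟩ = ⟨u, A u⟩`, so `‖T_N(A)‖` dominates the numerical radius `w(A)`.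
For normal `A`, `w(A) = ‖A‖` (take an eigenvector for an eigenvalue of maximal modulus, which is
the spectral radius), and in general `‖A‖ ≤ ‖Re A‖ + ‖Im A‖ = w(Re A) + w(Im A) ≤ 2 w(A)`.
-/

/-- The ℓ²→ℓ² operator norm of a square complex matrix (arbitrary finite index type). -/
noncomputable def opNorm {m : Type*} [Fintype m] [DecidableEq m] (A : Matrix m m ℂ) : ℝ :=
  ‖Matrix.toEuclideanCLM (𝕜 := ℂ) A‖

/-- The operator `I^{⊗(N-1-k)} ⊗ A ⊗ I^{⊗k}` on `(ℂⁿ)^{⊗N}`, realized on the index set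
`Fin N → Fin n`. -/
def embedAt {n N : ℕ} (k : Fin N) (A : Matrix (Fin n) (Fin n) ℂ) :
    Matrix (Fin N → Fin n) (Fin N → Fin n) ℂ :=
  Matrix.of fun x y =>
    A (x k) (y k) * ∏ j ∈ Finset.univ.erase k, (if x j = y j then (1 : ℂ) else 0)

/-- The macroscopic-observable map `T_N(A) = (1/N) ∑_{k=0}^{N-1} I^{⊗(N-1-k)} ⊗ A ⊗ I^{⊗k}`. -/
noncomputable def T (n N : ℕ) (A : Matrix (Fin n) (Fin n) ℂ) :
    Matrix (Fin N → Fin n) (Fin N → Fin n) ℂ :=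
  ((N : ℂ))⁻¹ • ∑ k : Fin N, embedAt k A

open Finset Matrix
open scoped Kronecker Matrix.Norms.L2Operator

lemma opNorm_eq_norm {m : Type*} [Fintype m] [DecidableEq m] (M : Matrix m m ℂ) :
    opNorm M = ‖M‖ :=
  rfl

section TensorVec

variable {ι m R : Type*} [Fintype ι] [CommSemiring R]

def tensorVec (v : ι → m → R) : (ι → m) → R := fun x => ∏ j, v j (x j)

variable [DecidableEq ι] [Fintype m] [StarRing R]

lemma star_tensorVec_dotProduct_tensorVec (v w : ι → m → R) :
    star (tensorVec v) ⬝ᵥ tensorVec w = ∏ j, star (v j) ⬝ᵥ w j := by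
  simp only [dotProduct, tensorVec, Pi.star_apply, star_prod, ← prod_mul_distrib]
  exact (Fintype.prod_sum fun j c => star (v j c) * w j c).symm

lemma star_tensorVec_const_dotProduct_self_eq_one {u : m → R} (hu : star u ⬝ᵥ u = 1) :
    star (tensorVec fun _ : ι => u) ⬝ᵥ tensorVec (fun _ => u) = 1 := by
  simp [star_tensorVec_dotProduct_tensorVec, hu]

end TensorVec

section EmbedAt

variable {n N : ℕ}

lemma embedAt_eq_submatrix_kronecker (k : Fin N) (A : Matrix (Fin n) (Fin n) ℂ) :
    embedAt k A = (A ⊗ₖ (1 : Matrix ({j // j ≠ k} → Fin n) _ ℂ)).submatrix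
      (Equiv.funSplitAt k (Fin n)) (Equiv.funSplitAt k (Fin n)) := by
  ext x y
  simp only [embedAt, of_apply, submatrix_apply, kroneckerMap_apply, one_apply, prod_boole,
    Equiv.funSplitAt, Equiv.piSplitAt, Equiv.coe_fn_mk, funext_iff, Subtype.forall, mem_erase,
    mem_univ, and_true]

@[simps]
def embedAtStarAlgHom (k : Fin N) :
    Matrix (Fin n) (Fin n) ℂ →⋆ₐ[ℂ] Matrix (Fin N → Fin n) (Fin N → Fin n) ℂ where
  toFun := embedAt k
  map_one' := by rw [embedAt_eq_submatrix_kronecker, one_kronecker_one, submatrix_one_equiv]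
  map_mul' A B := by
    simp only [embedAt_eq_submatrix_kronecker, submatrix_mul_equiv, ← mul_kronecker_mul, mul_one]
  map_zero' := by rw [embedAt_eq_submatrix_kronecker, zero_kronecker]; rfl
  map_add' A B := by simp only [embedAt_eq_submatrix_kronecker, add_kronecker]; rfl
  commutes' r := by
    rw [embedAt_eq_submatrix_kronecker, Algebra.algebraMap_eq_smul_one,
      Algebra.algebraMap_eq_smul_one, smul_kronecker, one_kronecker_one]
    exact congrArg (r • · : Matrix (Fin N → Fin n) _ ℂ → _) (submatrix_one_equiv _)
  map_star' A := by
    simp only [embedAt_eq_submatrix_kronecker, star_eq_conjTranspose, conjTranspose_kronecker,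
      conjTranspose_one, conjTranspose_submatrix]

lemma embedAt_mulVec_tensorVec (k : Fin N) (A : Matrix (Fin n) (Fin n) ℂ)
    (v : Fin N → Fin n → ℂ) :
    embedAt k A *ᵥ tensorVec v = tensorVec (Function.update v k (A *ᵥ v k)) := by
  funext x
  let g : ∀ j : Fin N, Fin n → ℂ := fun j c =>
    if j = k then A (x k) c * v k c else (if x j = c then 1 else 0) * v j c
  have hg : ∀ y : Fin N → Fin n, embedAt k A x y * tensorVec v y = ∏ j, g j (y j) := by
    intro y
    rw [← mul_prod_erase _ _ (mem_univ k), tensorVec, ← mul_prod_erase _ _ (mem_univ k)]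
    simp only [embedAt, of_apply, g, if_pos rfl]
    rw [mul_mul_mul_comm, ← prod_mul_distrib]
    congr 1
    exact prod_congr rfl fun j hj => by rw [if_neg (ne_of_mem_erase hj)]
  change ∑ y, embedAt k A x y * tensorVec v y = ∏ j, _
  simp_rw [hg]
  rw [← Fintype.prod_sum]
  refine prod_congr rfl fun j _ => ?_
  by_cases hj : j = k
  · subst hj
    simp [g, mulVec, dotProduct]
  · simp [g, hj]

lemma star_tensorVec_dotProduct_embedAt_mulVec {u : Fin n → ℂ} (hu : star u ⬝ᵥ u = 1) (k : Fin N)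
    (A : Matrix (Fin n) (Fin n) ℂ) :
    star (tensorVec fun _ => u) ⬝ᵥ embedAt k A *ᵥ tensorVec (fun _ => u) = star u ⬝ᵥ A *ᵥ u := by
  rw [embedAt_mulVec_tensorVec, star_tensorVec_dotProduct_tensorVec,
    ← mul_prod_erase _ _ (mem_univ k), Function.update_self,
    prod_eq_one fun j hj => by rw [Function.update_of_ne (ne_of_mem_erase hj), hu], mul_one]

end EmbedAt

section QuadraticForm

variable {m : Type*} [Fintype m]

lemma star_dotProduct_conjTranspose_mulVec {R : Type*} [CommSemiring R] [StarRing R]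
    (A : Matrix m m R) (u v : m → R) :
    star u ⬝ᵥ Aᴴ *ᵥ v = star (star v ⬝ᵥ A *ᵥ u) := by
  rw [star_dotProduct, star_mulVec, conjTranspose_conjTranspose, dotProduct_mulVec]

lemma star_dotProduct_self_eq_norm_sq (u : m → ℂ) :
    star u ⬝ᵥ u = (‖WithLp.toLp 2 u‖ ^ 2 : ℝ) := by
  rw [dotProduct_comm, ← EuclideanSpace.inner_toLp_toLp, inner_self_eq_norm_sq_to_K]
  push_cast
  rfl

lemma star_dotProduct_realPart_mulVec [DecidableEq m] (A : Matrix m m ℂ) (u : m → ℂ) :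
    star u ⬝ᵥ (realPart A : Matrix m m ℂ) *ᵥ u = (star u ⬝ᵥ A *ᵥ u).re := by
  rw [realPart_apply_coe, smul_mulVec, add_mulVec, dotProduct_smul, dotProduct_add,
    star_eq_conjTranspose, star_dotProduct_conjTranspose_mulVec, Complex.re_eq_add_conj]
  simp [Complex.real_smul, div_eq_inv_mul, mul_add]

variable [DecidableEq m]

lemma norm_star_dotProduct_mulVec_le (M : Matrix m m ℂ) {u : m → ℂ} (hu : star u ⬝ᵥ u = 1) :
    ‖star u ⬝ᵥ M *ᵥ u‖ ≤ ‖M‖ := by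
  have hu' : ‖WithLp.toLp 2 u‖ = 1 := by
    rw [star_dotProduct_self_eq_norm_sq] at hu
    exact (pow_eq_one_iff_of_nonneg (norm_nonneg _) two_ne_zero).mp (by exact_mod_cast hu)
  calc ‖star u ⬝ᵥ M *ᵥ u‖ = ‖inner ℂ (WithLp.toLp 2 u) (WithLp.toLp 2 (M *ᵥ u))‖ := by
        rw [EuclideanSpace.inner_toLp_toLp, dotProduct_comm]
    _ ≤ ‖WithLp.toLp 2 u‖ * ‖WithLp.toLp 2 (M *ᵥ u)‖ := norm_inner_le_norm _ _
    _ ≤ ‖WithLp.toLp 2 u‖ * (‖M‖ * ‖WithLp.toLp 2 u‖) := by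
        gcongr
        exact M.l2_opNorm_mulVec (WithLp.toLp 2 u)
    _ = ‖M‖ := by rw [hu', one_mul, mul_one]

end QuadraticForm

section NumericalRange

variable {m : Type*} [Fintype m] [DecidableEq m]

lemma exists_unit_mulVec_eq_smul_of_mem_spectrum (A : Matrix m m ℂ)
    {z : ℂ} (hz : z ∈ spectrum ℂ A) :
    ∃ u : m → ℂ, star u ⬝ᵥ u = 1 ∧ A *ᵥ u = z • u := by
  obtain ⟨x, hx⟩ := (Module.End.hasEigenvalue_iff_mem_spectrum.mpr
    (by rwa [spectrum_toLin'] : z ∈ spectrum ℂ (toLin' A))).exists_hasEigenvector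
  have hAx : A *ᵥ x = z • x := by simpa using hx.apply_eq_smul
  have hx0 : ‖WithLp.toLp 2 x‖ ≠ 0 := by simpa using hx.2
  refine ⟨(‖WithLp.toLp 2 x‖⁻¹ : ℂ) • x, ?_, by rw [mulVec_smul, hAx, smul_comm]⟩
  rw [star_dotProduct_self_eq_norm_sq, WithLp.toLp_smul, norm_smul]
  simp [hx0]

lemma IsStarNormal.norm_le_of_forall_norm_star_dotProduct_mulVec_le {A : Matrix m m ℂ}
    (hA : IsStarNormal A) {c : ℝ} (hc : 0 ≤ c)
    (h : ∀ u : m → ℂ, star u ⬝ᵥ u = 1 → ‖star u ⬝ᵥ A *ᵥ u‖ ≤ c) : ‖A‖ ≤ c := by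
  cases isEmpty_or_nonempty m
  · rwa [Subsingleton.elim A 0, norm_zero]
  obtain ⟨z, hz, hzA⟩ := spectrum.exists_nnnorm_eq_spectralRadius A
  rw [hA.spectralRadius_eq_nnnorm, ENNReal.coe_inj] at hzA
  obtain ⟨u, hu, hAu⟩ := exists_unit_mulVec_eq_smul_of_mem_spectrum A hz
  calc ‖A‖ = ‖star u ⬝ᵥ A *ᵥ u‖ := by
        rw [hAu, dotProduct_smul, hu, smul_eq_mul, mul_one]
        exact congrArg NNReal.toReal hzA.symm
    _ ≤ c := h u hu

lemma norm_le_two_mul_of_forall_norm_star_dotProduct_mulVec_le (A : Matrix m m ℂ) {c : ℝ}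
    (hc : 0 ≤ c) (h : ∀ u : m → ℂ, star u ⬝ᵥ u = 1 → ‖star u ⬝ᵥ A *ᵥ u‖ ≤ c) :
    ‖A‖ ≤ 2 * c := by
  have norm_realPart_le : ∀ B : Matrix m m ℂ,
      (∀ u : m → ℂ, star u ⬝ᵥ u = 1 → ‖star u ⬝ᵥ B *ᵥ u‖ ≤ c) → ‖(realPart B : Matrix m m ℂ)‖ ≤ c :=
    fun B hB => (realPart B).2.isStarNormal.norm_le_of_forall_norm_star_dotProduct_mulVec_le hc
      fun u hu => by
        rw [star_dotProduct_realPart_mulVec, Complex.norm_real, Real.norm_eq_abs]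
        exact (Complex.abs_re_le_norm _).trans (hB u hu)
  have hre := norm_realPart_le A h
  have him : ‖(imaginaryPart A : Matrix m m ℂ)‖ ≤ c := by
    rw [← norm_neg, ← NegMemClass.coe_neg, ← realPart_I_smul]
    refine norm_realPart_le _ fun u hu => ?_
    rw [smul_mulVec, dotProduct_smul, smul_eq_mul, norm_mul, Complex.norm_I, one_mul]
    exact h u hu
  calc ‖A‖ = ‖(realPart A : Matrix m m ℂ) + Complex.I • (imaginaryPart A : Matrix m m ℂ)‖ := by
        rw [realPart_add_I_smul_imaginaryPart]
    _ ≤ ‖(realPart A : Matrix m m ℂ)‖ + ‖(imaginaryPart A : Matrix m m ℂ)‖ := by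
        refine (norm_add_le _ _).trans_eq ?_
        rw [norm_smul, Complex.norm_I, one_mul]
    _ ≤ 2 * c := by linarith

end NumericalRange

section MacroscopicObservable

variable {n N : ℕ}

lemma norm_embedAt_le (k : Fin N) (A : Matrix (Fin n) (Fin n) ℂ) : ‖embedAt k A‖ ≤ ‖A‖ :=
  NonUnitalStarAlgHom.norm_apply_le (embedAtStarAlgHom k) A

lemma norm_T_le (hN : 0 < N) (A : Matrix (Fin n) (Fin n) ℂ) : ‖T n N A‖ ≤ ‖A‖ :=
  calc ‖T n N A‖ ≤ (N : ℝ)⁻¹ * ∑ k : Fin N, ‖embedAt k A‖ := by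
        rw [T, norm_smul, norm_inv, Complex.norm_natCast]
        gcongr
        exact norm_sum_le _ _
    _ ≤ (N : ℝ)⁻¹ * ∑ _k : Fin N, ‖A‖ := by gcongr with k; exact norm_embedAt_le k A
    _ = ‖A‖ := by
        rw [sum_const, card_univ, Fintype.card_fin, nsmul_eq_mul,
          inv_mul_cancel_left₀ (Nat.cast_ne_zero.mpr hN.ne')]

lemma star_tensorVec_dotProduct_T_mulVec (hN : 0 < N) {u : Fin n → ℂ} (hu : star u ⬝ᵥ u = 1)
    (A : Matrix (Fin n) (Fin n) ℂ) :
    star (tensorVec fun _ => u) ⬝ᵥ T n N A *ᵥ tensorVec (fun _ => u) = star u ⬝ᵥ A *ᵥ u := by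
  simp only [T, smul_mulVec, sum_mulVec, dotProduct_smul, dotProduct_sum,
    star_tensorVec_dotProduct_embedAt_mulVec hu, sum_const, card_univ, Fintype.card_fin,
    nsmul_eq_mul, smul_eq_mul]
  exact inv_mul_cancel_left₀ (Nat.cast_ne_zero.mpr hN.ne') _

lemma norm_star_dotProduct_mulVec_le_norm_T (hN : 0 < N) (A : Matrix (Fin n) (Fin n) ℂ)
    {u : Fin n → ℂ} (hu : star u ⬝ᵥ u = 1) : ‖star u ⬝ᵥ A *ᵥ u‖ ≤ ‖T n N A‖ := by
  rw [← star_tensorVec_dotProduct_T_mulVec hN hu]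
  exact norm_star_dotProduct_mulVec_le _ (star_tensorVec_const_dotProduct_self_eq_one hu)

lemma norm_le_two_mul_norm_T (hN : 0 < N) (A : Matrix (Fin n) (Fin n) ℂ) :
    ‖A‖ ≤ 2 * ‖T n N A‖ :=
  norm_le_two_mul_of_forall_norm_star_dotProduct_mulVec_le A (norm_nonneg _)
    fun _ => norm_star_dotProduct_mulVec_le_norm_T hN A

lemma T_sub (A B : Matrix (Fin n) (Fin n) ℂ) : T n N (A - B) = T n N A - T n N B := by
  simp only [T, ← embedAtStarAlgHom_apply, map_sub, sum_sub_distrib, smul_sub]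

end MacroscopicObservable

/-- **Norm equivalence for macroscopic observables.**
`(1/2) ‖A‖ ≤ ‖T_N(A)‖ ≤ ‖A‖`, with equality `‖T_N(A)‖ = ‖A‖` when `A` is normal;
in particular `T_N` is injective. -/
theorem stmt_18 (n N : ℕ) (hN : 0 < N) (A : Matrix (Fin n) (Fin n) ℂ) :
    (1 / 2) * opNorm A ≤ opNorm (T n N A) ∧
    opNorm (T n N A) ≤ opNorm A ∧
    (IsStarNormal A → opNorm (T n N A) = opNorm A) ∧
    Function.Injective (T n N) := by
  simp only [opNorm_eq_norm]
  refine ⟨by linarith [norm_le_two_mul_norm_T hN A], norm_T_le hN A, fun hA => ?_,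
    fun B C hBC => ?_⟩
  · exact (norm_T_le hN A).antisymm <| hA.norm_le_of_forall_norm_star_dotProduct_mulVec_le
      (norm_nonneg _) fun _ => norm_star_dotProduct_mulVec_le_norm_T hN A
  · have h := norm_le_two_mul_norm_T hN (B - C)
    rw [T_sub, hBC, sub_self, norm_zero, mul_zero] at h
    exact sub_eq_zero.mp (norm_le_zero_iff.mp h)
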